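/- arXiv:1204.0831 — 6 statements merged into one kernel-verified Lean document; each statement's English description precedes it below -/
import Mathlib

section
/- Let f : ℝ^m × ℝ^m → ℝ be a smooth function with f(x,x) = 0 for all x, and suppose its selection gradient s(x) = ∇_y f(x,y)|_{y=x} is a gradient field, i.e., s = ∇S for some smooth S : ℝ^m → ℝ. Define K̃(x) = exp(S(x)) and α̃(x,y) = (1 - f(x,y))·K̃(y)/K̃(x). Then K̃(x) > 0 for all x, α̃(x,x) = 1 for all x, ∇_y α̃(x,y)|_{y=x} = 0 for all x, and f(x,y) = 1 - α̃(x,y)·K̃(x)/K̃(y) for all x, y. -/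
theorem stmt_1 {m : ℕ}
    (f : (Fin m → ℝ) → (Fin m → ℝ) → ℝ)
    (hf : ContDiff ℝ (⊤ : ℕ∞) (fun p : (Fin m → ℝ) × (Fin m → ℝ) => f p.1 p.2))
    (hf0 : ∀ x, f x x = 0)
    (S : (Fin m → ℝ) → ℝ) (hS : ContDiff ℝ (⊤ : ℕ∞) S)
    (hgrad : ∀ (x : Fin m → ℝ) (i : Fin m),
      fderiv ℝ (f x) x (Pi.single i 1) = fderiv ℝ S x (Pi.single i 1))
    (Ktil : (Fin m → ℝ) → ℝ) (hKtil : ∀ x, Ktil x = Real.exp (S x))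
    (αtil : (Fin m → ℝ) → (Fin m → ℝ) → ℝ)
    (hαtil : ∀ x y, αtil x y = (1 - f x y) * Ktil y / Ktil x) :
    (∀ x, 0 < Ktil x) ∧
    (∀ x, αtil x x = 1) ∧
    (∀ (x : Fin m → ℝ) (i : Fin m), fderiv ℝ (αtil x) x (Pi.single i 1) = 0) ∧
    (∀ x y, f x y = 1 - αtil x y * Ktil x / Ktil y) := by
  have hKpos : ∀ x, 0 < Ktil x := fun x => by rw [hKtil]; exact Real.exp_pos _
  refine ⟨hKpos, ?_, ?_, ?_⟩
  · intro x
    rw [hαtil, hf0]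
    simp [div_self (hKpos x).ne']
  · intro x i
    have hfd : DifferentiableAt ℝ (f x) x := by
      have h1 : f x = (fun p : (Fin m → ℝ) × (Fin m → ℝ) => f p.1 p.2) ∘ (fun y => (x, y)) := rfl
      rw [h1]
      exact ((hf.differentiable (by simp)) (x, x)).comp x
        (DifferentiableAt.prodMk (differentiableAt_const x) differentiableAt_id)
    have hSd : DifferentiableAt ℝ S x := hS.differentiable (by simp) x
    have heq : αtil x = fun y => (1 - f x y) * Real.exp (S y) * (Real.exp (S x))⁻¹ := by
      funext y; rw [hαtil, hKtil, hKtil]; ring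
    have h1d : DifferentiableAt ℝ (fun y => 1 - f x y) x :=
      (differentiableAt_const 1).sub hfd
    have hEd : DifferentiableAt ℝ (fun y => Real.exp (S y)) x := hSd.exp
    rw [heq, fderiv_mul_const (c := fun y => (1 - f x y) * Real.exp (S y)) (h1d.mul hEd),
      show (fun y => (1 - f x y) * Real.exp (S y)) = (fun y => 1 - f x y) * (fun y => Real.exp (S y)) from rfl,
      fderiv_mul h1d hEd,
      fderiv_exp hSd, fderiv_const_sub (1:ℝ)]
    simp only [ContinuousLinearMap.smul_apply, ContinuousLinearMap.add_apply,
      ContinuousLinearMap.neg_apply, ContinuousLinearMap.smul_apply, smul_eq_mul,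
      hf0, hgrad]
    ring
  · intro x y
    have h := hαtil x y
    have hx := (hKpos x).ne'
    have hy := (hKpos y).ne'
    field_simp at h ⊢
    linarith [h]
end

section
/- Let f : ℝ^m × ℝ^m → ℝ be smooth and suppose its selection gradient s(x) = ∇_y f(x,y)|_{y=x} satisfies s = ∇S for some smooth S : ℝ^m → ℝ. Then the mixed-partial gradient condition holds: ∂²f/∂x_i∂y_j |_{y=x} = ∂²f/∂x_j∂y_i |_{y=x} for all i, j and all x. -/
theorem stmt_3 {m : ℕ}
    (f : (Fin m → ℝ) → (Fin m → ℝ) → ℝ)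
    (hf : ContDiff ℝ (⊤ : ℕ∞) (fun p : (Fin m → ℝ) × (Fin m → ℝ) => f p.1 p.2))
    (S : (Fin m → ℝ) → ℝ) (hS : ContDiff ℝ (⊤ : ℕ∞) S)
    (hgrad : ∀ (x : Fin m → ℝ) (i : Fin m),
      fderiv ℝ (f x) x (Pi.single i 1) = fderiv ℝ S x (Pi.single i 1)) :
    ∀ (x : Fin m → ℝ) (i j : Fin m),
      fderiv ℝ (fun u => fderiv ℝ (f u) x (Pi.single j 1)) x (Pi.single i 1)
        = fderiv ℝ (fun u => fderiv ℝ (f u) x (Pi.single i 1)) x (Pi.single j 1) := by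
  intro x i j
  have hFd : Differentiable ℝ (fun p : (Fin m → ℝ) × (Fin m → ℝ) => f p.1 p.2) :=
    hf.differentiable (by simp)
  set Φ := fderiv ℝ (fun p : (Fin m → ℝ) × (Fin m → ℝ) => f p.1 p.2) with hΦdef
  have hΦ : ContDiff ℝ (⊤ : ℕ∞) Φ := hf.fderiv_right (by simp)
  have hΦd : Differentiable ℝ Φ := hΦ.differentiable (by simp)
  set H := fderiv ℝ Φ (x, x) with hHdef
  have hH : HasFDerivAt Φ H (x, x) := (hΦd (x, x)).hasFDerivAt
  have hHsymm : ∀ a b, H a b = H b a :=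
    second_derivative_symmetric (fun y => (hFd y).hasFDerivAt) hH
  -- Lemma A : mutant-direction derivative via Φ
  have hAeq : ∀ (u v w : Fin m → ℝ), fderiv ℝ (f u) v w = Φ (u, v) (0, w) := by
    intro u v w
    have h1 : HasFDerivAt (fun w : Fin m → ℝ => (u, w))
        ((0 : (Fin m → ℝ) →L[ℝ] (Fin m → ℝ)).prod (ContinuousLinearMap.id ℝ _)) v :=
      HasFDerivAt.prodMk (hasFDerivAt_const u v) (hasFDerivAt_id v)
    have h2 := ((hFd (u, v)).hasFDerivAt).comp v h1
    have h2' : HasFDerivAt (f u)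
        ((Φ (u, v)).comp ((0 : (Fin m → ℝ) →L[ℝ] (Fin m → ℝ)).prod
          (ContinuousLinearMap.id ℝ _))) v := h2
    rw [h2'.fderiv]
    simp
  -- Lemma B : derivative in resident direction at fixed mutant point
  have hB : ∀ (v e : Fin m → ℝ),
      fderiv ℝ (fun u => fderiv ℝ (f u) x e) x v = H (v, 0) (0, e) := by
    intro v e
    have h1 : HasFDerivAt (fun u : Fin m → ℝ => (u, x))
        ((ContinuousLinearMap.id ℝ _).prod (0 : (Fin m → ℝ) →L[ℝ] (Fin m → ℝ))) x :=
      HasFDerivAt.prodMk (hasFDerivAt_id x) (hasFDerivAt_const x x)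
    have h2 : HasFDerivAt (Φ ∘ fun u : Fin m → ℝ => (u, x))
        (H.comp ((ContinuousLinearMap.id ℝ _).prod (0 : (Fin m → ℝ) →L[ℝ] (Fin m → ℝ)))) x :=
      HasFDerivAt.comp (g := Φ) (f := fun u : Fin m → ℝ => (u, x)) x hH h1
    have h3 := h2.clm_apply (hasFDerivAt_const ((0 : Fin m → ℝ), e) x)
    have h3' : HasFDerivAt (fun u => fderiv ℝ (f u) x e) _ x :=
      h3.congr_of_eventuallyEq (Filter.Eventually.of_forall fun u => (hAeq u x e))
    rw [h3'.fderiv]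
    simp
  -- second derivative of S
  have hSd : Differentiable ℝ S := hS.differentiable (by simp)
  have hS' : ContDiff ℝ (⊤ : ℕ∞) (fderiv ℝ S) := hS.fderiv_right (by simp)
  set T := fderiv ℝ (fderiv ℝ S) x with hTdef
  have hT : HasFDerivAt (fderiv ℝ S) T x := (hS'.differentiable (by simp) x).hasFDerivAt
  have hTsymm : ∀ a b, T a b = T b a :=
    second_derivative_symmetric (fun y => (hSd y).hasFDerivAt) hT
  -- diagonal identity
  have hdiag : ∀ (k : Fin m) (v : Fin m → ℝ),
      H (v, v) (0, Pi.single k 1) = T v (Pi.single k 1) := by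
    intro k v
    have h1 : HasFDerivAt (fun u : Fin m → ℝ => (u, u))
        ((ContinuousLinearMap.id ℝ _).prod (ContinuousLinearMap.id ℝ _)) x :=
      HasFDerivAt.prodMk (hasFDerivAt_id x) (hasFDerivAt_id x)
    have h2 : HasFDerivAt (Φ ∘ fun u : Fin m → ℝ => (u, u))
        (H.comp ((ContinuousLinearMap.id ℝ _).prod (ContinuousLinearMap.id ℝ _))) x :=
      HasFDerivAt.comp (g := Φ) (f := fun u : Fin m → ℝ => (u, u)) x hH h1
    have h3 := h2.clm_apply (hasFDerivAt_const ((0 : Fin m → ℝ), Pi.single k 1) x)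
    have h4 := hT.clm_apply (hasFDerivAt_const (Pi.single k 1) x)
    have h3' : HasFDerivAt (fun u => fderiv ℝ S u (Pi.single k 1)) _ x :=
      h3.congr_of_eventuallyEq (Filter.Eventually.of_forall fun u => by
        show fderiv ℝ S u (Pi.single k 1) = Φ (u, u) ((0 : Fin m → ℝ), Pi.single k 1)
        rw [← hgrad u k, hAeq u u (Pi.single k 1)])
    have := congrArg (fun L => L v) (h3'.fderiv.symm.trans h4.fderiv)
    simpa using this
  -- assemble
  have hsplit : ∀ (v e : Fin m → ℝ),
      H (v, v) (0, e) = H (v, 0) (0, e) + H (0, v) (0, e) := by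
    intro v e
    have hv : ((v, v) : (Fin m → ℝ) × (Fin m → ℝ)) = (v, 0) + (0, v) := by simp
    rw [hv, map_add]
    rfl
  have key : ∀ (a b : Fin m),
      H (Pi.single a 1, 0) (0, Pi.single b 1)
        = T (Pi.single a 1) (Pi.single b 1)
          - H (0, Pi.single a 1) (0, Pi.single b 1) := by
    intro a b
    have h := hdiag b (Pi.single a 1)
    rw [hsplit] at h
    linarith
  rw [hB, hB, key i j, key j i,
    hTsymm (Pi.single i 1) (Pi.single j 1),
    hHsymm (0, Pi.single i 1) (0, Pi.single j 1)]
end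

section
/- Let f : ℝ × ℝ → ℝ be any smooth invasion fitness function on a 1-dimensional phenotype space with f(x,x) = 0 for all x. Then there exist smooth functions K̃ : ℝ → ℝ with K̃ > 0 and α̃ : ℝ × ℝ → ℝ with α̃(x,x) = 1 and ∂α̃(x,y)/∂y |_{y=x} = 0 for all x, such that f(x,y) = 1 - α̃(x,y)K̃(x)/K̃(y). -/
open scoped Topology

theorem stmt_5
    (f : ℝ → ℝ → ℝ)
    (hf : ContDiff ℝ (⊤ : ℕ∞) (fun p : ℝ × ℝ => f p.1 p.2))
    (hf0 : ∀ x, f x x = 0) :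
    ∃ (Ktil : ℝ → ℝ) (αtil : ℝ → ℝ → ℝ),
      ContDiff ℝ (⊤ : ℕ∞) Ktil ∧ (∀ x, 0 < Ktil x) ∧
      ContDiff ℝ (⊤ : ℕ∞) (fun p : ℝ × ℝ => αtil p.1 p.2) ∧
      (∀ x, αtil x x = 1) ∧
      (∀ x, deriv (αtil x) x = 0) ∧
      (∀ x y, f x y = 1 - αtil x y * Ktil x / Ktil y) := by
  set F : ℝ × ℝ → ℝ := fun p => f p.1 p.2 with hF
  have hFd : Differentiable ℝ F := hf.differentiable (by simp)
  set s : ℝ → ℝ := fun x => fderiv ℝ F (x, x) (0, 1) with hs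
  have hderiv : ∀ x y : ℝ, HasDerivAt (f x) (fderiv ℝ F (x, y) (0, 1)) y := by
    intro x y
    have h1 : HasDerivAt (fun y : ℝ => ((x : ℝ), y)) ((0 : ℝ), (1 : ℝ)) y :=
      (hasDerivAt_const y x).prodMk (hasDerivAt_id y)
    have h2 := (hFd (x, y)).hasFDerivAt.comp_hasDerivAt y h1
    exact h2
  have hs_smooth : ContDiff ℝ (⊤ : ℕ∞) s := by
    have h1 : ContDiff ℝ (⊤ : ℕ∞) (fderiv ℝ F) := hf.fderiv_right (by simp)
    have h2 : ContDiff ℝ (⊤ : ℕ∞) (fun p : ℝ × ℝ => fderiv ℝ F p ((0 : ℝ), (1 : ℝ))) :=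
      h1.clm_apply contDiff_const
    exact h2.comp (contDiff_id.prodMk contDiff_id)
  set S : ℝ → ℝ := fun x => ∫ t in (0 : ℝ)..x, s t with hSdef
  have hS : ∀ x, HasDerivAt S (s x) x := fun x =>
    (hs_smooth.continuous.integral_hasStrictDerivAt 0 x).hasDerivAt
  have hS_smooth : ContDiff ℝ (⊤ : ℕ∞) S := by
    have hderivS : deriv S = s := funext fun x => (hS x).deriv
    rw [contDiff_infty_iff_deriv]
    exact ⟨fun x => (hS x).differentiableAt, hderivS ▸ hs_smooth⟩
  set K : ℝ → ℝ := fun x => Real.exp (S x) with hKdef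
  have hK_smooth : ContDiff ℝ (⊤ : ℕ∞) K := Real.contDiff_exp.comp hS_smooth
  have hKpos : ∀ x, 0 < K x := fun x => Real.exp_pos _
  have hK : ∀ x, HasDerivAt K (K x * s x) x := fun x => (hS x).exp
  refine ⟨K, fun x y => (1 - f x y) * K y / K x, hK_smooth, hKpos, ?_, ?_, ?_, ?_⟩
  · exact ((contDiff_const.sub hf).mul (hK_smooth.comp contDiff_snd)).div
      (hK_smooth.comp contDiff_fst) (fun p => (hKpos p.1).ne')
  · intro x; simp only []; rw [hf0 x]; simp [(hKpos x).ne']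
  · intro x
    have h1 : HasDerivAt (fun y => 1 - f x y) (-(s x)) x := by
      simpa using (hderiv x x).const_sub 1
    have h2 : HasDerivAt (fun y => (1 - f x y) * K y / K x)
        ((-(s x) * K x + (1 - f x x) * (K x * s x)) / K x) x :=
      (h1.mul (hK x)).div_const (K x)
    have := h2.deriv
    rw [this, hf0 x]; ring
  · intro x y
    have hx := (hKpos x).ne'
    have hy := (hKpos y).ne'
    field_simp; ring
end

section
/- Consider the asymmetric competition invasion fitness f(x,y) = 1 - α(x,y)K(x)/K(y) on ℝ, where K : ℝ → ℝ is smooth and positive, α : ℝ × ℝ → ℝ is smooth with α(x,x) = 1 for all x. Let A(x) = ∂α(x,y)/∂y |_{y=x}, and define K̃(x) = exp(−∫₀^x A(t)dt + log K(x)) and α̃(x,y) = (1 − f(x,y))K̃(y)/K̃(x). Then K̃ > 0, α̃(x,x) = 1, ∂α̃(x,y)/∂y |_{y=x} = 0 for all x, and f(x,y) = 1 − α̃(x,y)K̃(x)/K̃(y) for all x, y. -/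
theorem stmt_6
    (K Ktil : ℝ → ℝ) (α f αtil : ℝ → ℝ → ℝ)
    (hK : ContDiff ℝ (⊤ : ℕ∞) K) (hKpos : ∀ x, 0 < K x)
    (hα : ContDiff ℝ (⊤ : ℕ∞) (fun p : ℝ × ℝ => α p.1 p.2))
    (hα1 : ∀ x, α x x = 1)
    (hf : ∀ x y, f x y = 1 - α x y * K x / K y)
    (hKtil : ∀ x, Ktil x = Real.exp (-(∫ t in (0:ℝ)..x, deriv (α t) t) + Real.log (K x)))
    (hαtil : ∀ x y, αtil x y = (1 - f x y) * Ktil y / Ktil x) :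
    (∀ x, 0 < Ktil x) ∧
    (∀ x, αtil x x = 1) ∧
    (∀ x, deriv (αtil x) x = 0) ∧
    (∀ x y, f x y = 1 - αtil x y * Ktil x / Ktil y) := by
  have hKtilpos : ∀ x, 0 < Ktil x := by
    intro x; rw [hKtil]; exact Real.exp_pos _
  have hKne : ∀ x, K x ≠ 0 := fun x => (hKpos x).ne'
  have hKtilne : ∀ x, Ktil x ≠ 0 := fun x => (hKtilpos x).ne'
  set F : ℝ × ℝ → ℝ := fun p => α p.1 p.2 with hF
  have hFdiff : Differentiable ℝ F := hα.differentiable (by simp)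
  have hA : ∀ t : ℝ, HasDerivAt (α t) ((fderiv ℝ F (t, t)) (0, 1)) t := by
    intro t
    have h1 : HasFDerivAt F (fderiv ℝ F (t, t)) (t, t) := (hFdiff (t, t)).hasFDerivAt
    have h2 : HasDerivAt (fun y : ℝ => ((t, y) : ℝ × ℝ)) ((0 : ℝ), (1 : ℝ)) t := by
      simpa using (hasDerivAt_const t t).prodMk (hasDerivAt_id t)
    have h3 := h1.comp_hasDerivAt t h2
    exact h3
  set A : ℝ → ℝ := fun t => deriv (α t) t with hAdef
  have hAd : ∀ t, A t = (fderiv ℝ F (t, t)) (0, 1) := fun t => (hA t).deriv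
  have hAcont : Continuous A := by
    have hc : Continuous fun t : ℝ => fderiv ℝ F (t, t) :=
      (hα.continuous_fderiv (by simp)).comp (continuous_id.prodMk continuous_id)
    have : Continuous fun t : ℝ => (fderiv ℝ F (t, t)) ((0 : ℝ), (1 : ℝ)) :=
      hc.clm_apply continuous_const
    have heq : (fun t : ℝ => (fderiv ℝ F (t, t)) ((0 : ℝ), (1 : ℝ))) = A := by
      funext t; rw [hAd t]
    rwa [heq] at this
  set I : ℝ → ℝ := fun y => ∫ t in (0:ℝ)..y, A t with hIdef
  have hI : ∀ x : ℝ, HasDerivAt I (A x) x := fun x =>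
    (hAcont.integral_hasStrictDerivAt 0 x).hasDerivAt
  have hderiv : ∀ x, deriv (αtil x) x = 0 := by
    intro x
    set g : ℝ → ℝ := fun y => α x y * Real.exp (-(I y)) * (K x / Ktil x) with hgdef
    have hg : αtil x = g := by
      funext y
      rw [hαtil, hf, hKtil y, hgdef]
      have : Real.exp (-(∫ t in (0:ℝ)..y, deriv (α t) t) + Real.log (K y))
          = Real.exp (-(I y)) * K y := by
        rw [Real.exp_add, Real.exp_log (hKpos y)]
      rw [this]
      field_simp
      rw [sub_sub_cancel, mul_div_cancel₀ _ (hKne y)]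
    rw [hg]
    have hαx : HasDerivAt (α x) (A x) x := by rw [hAd x]; exact hA x
    have hexp : HasDerivAt (fun y => Real.exp (-(I y)))
        (Real.exp (-(I x)) * (-(A x))) x := ((hI x).neg).exp
    have hgd : HasDerivAt g ((A x * Real.exp (-(I x)) + α x x * (Real.exp (-(I x)) * (-(A x)))) * (K x / Ktil x)) x :=
      (hαx.mul hexp).mul_const _
    have h0 : (A x * Real.exp (-(I x)) + α x x * (Real.exp (-(I x)) * (-(A x)))) * (K x / Ktil x) = 0 := by
      rw [hα1]; ring
    rw [h0] at hgd
    exact hgd.deriv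
  refine ⟨hKtilpos, ?_, hderiv, ?_⟩
  · intro x
    rw [hαtil, hf x x, hα1, one_mul, div_self (hKne x)]
    rw [mul_div_cancel_right₀ _ (hKtilne x)]
    ring
  · intro x y
    rw [hαtil, div_mul_cancel₀ _ (hKtilne x), mul_div_cancel_right₀ _ (hKtilne y)]
    ring
end

section
/- Let K(x₁,x₂) = exp(−(x₁⁴+x₂⁴)/(2σ_K⁴)) and α(x,y) = exp(−((x₁−y₁)²+(x₂−y₂)²)/(2σ_α²)) · exp(c₁(x₁y₂−x₂y₁) + c₂(x₁(y₁−x₁)+x₂(y₂−x₂))), and let f(x,y) = 1 − α(x,y)K(x)/K(y) with selection gradient s(x) = ∇_y f(x,y)|_{y=x}. Then x* = (0,0) is a singular point (s(0,0) = 0), and the Jacobian matrix of s at (0,0) has eigenvalues −c₂ ± i·c₁. -/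
/-!
Writing `α x y * K x / K y = exp (E x y)`, the invasion fitness is `1 - exp (E x y)` with
`E x x = 0`, so the selection gradient is `-∇_y E (x, y)` at `y = x`. The Gaussian competition
term is quadratic in `x - y` and drops out there, which leaves
`s(x) = (c₁ x₂ - c₂ x₁ - 2 x₁³ / σ_K⁴, -c₁ x₁ - c₂ x₂ - 2 x₂³ / σ_K⁴)`.
Its Jacobian at the origin is the rotation-scaling matrix `[[-c₂, c₁], [-c₁, -c₂]]`,
whose eigenvalues are `-c₂ ± i c₁`.
-/

open Real

lemma hasDerivAt_one_sub_exp_of_eq_zero {g : ℝ → ℝ} {g' a : ℝ} (hg : HasDerivAt g g' a)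
    (h0 : g a = 0) : HasDerivAt (fun t => 1 - exp (g t)) (-g') a := by
  simpa [h0] using hg.exp.const_sub 1

lemma hasDerivAt_gaussian_quartic (σα σK u v k : ℝ) :
    HasDerivAt (fun t => -(u - t) ^ 2 / (2 * σα ^ 2) + v * t + t ^ 4 / (2 * σK ^ 4) + k)
      (v + 2 * u ^ 3 / σK ^ 4) u := by
  have h := (((((hasDerivAt_id' u).const_sub u).pow 2).neg.div_const (2 * σα ^ 2)).add
    ((hasDerivAt_id' u).const_mul v)).add ((hasDerivAt_pow 4 u).div_const (2 * σK ^ 4))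
    |>.add_const k
  exact h.congr_deriv (by push_cast; ring)

lemma deriv_zero_of_eq_mul_sub_mul_pow_three {g : ℝ → ℝ} (v c : ℝ)
    (hg : ∀ t, g t = v * t - c * t ^ 3) : deriv g 0 = v := by
  have h := ((hasDerivAt_id' (0 : ℝ)).const_mul v).sub ((hasDerivAt_pow 3 (0 : ℝ)).const_mul c)
  rw [show g = fun t => v * t - c * t ^ 3 from funext hg]
  exact (h.congr_deriv (by simp)).deriv

lemma det_rotationScaling_sub_smul_one_eq_zero (a b : ℝ) {μ : ℂ}
    (hμ : ((a : ℂ) - μ) ^ 2 = -(b : ℂ) ^ 2) :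
    Matrix.det ((!![a, b; -b, a]).map Complex.ofReal - μ • 1) = 0 := by
  rw [Matrix.det_fin_two]
  simp only [Matrix.sub_apply, Matrix.map_apply, Matrix.of_apply, Matrix.cons_val',
    Matrix.cons_val_zero, Matrix.cons_val_one, Matrix.cons_val_fin_one, Matrix.smul_apply,
    Matrix.one_apply_eq, Matrix.one_apply_ne zero_ne_one, Matrix.one_apply_ne one_ne_zero,
    smul_eq_mul, Complex.ofReal_neg]
  linear_combination hμ

noncomputable def competitionExponent (σK σα c₁ c₂ : ℝ) (x y : ℝ × ℝ) : ℝ :=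
  -((x.1 - y.1) ^ 2 + (x.2 - y.2) ^ 2) / (2 * σα ^ 2)
    + (c₁ * (x.1 * y.2 - x.2 * y.1) + c₂ * (x.1 * (y.1 - x.1) + x.2 * (y.2 - x.2)))
    + (y.1 ^ 4 + y.2 ^ 4 - (x.1 ^ 4 + x.2 ^ 4)) / (2 * σK ^ 4)

section CompetitionModel

variable {σK σα c₁ c₂ : ℝ} {K : ℝ × ℝ → ℝ} {α f : ℝ × ℝ → ℝ × ℝ → ℝ}

lemma eq_one_sub_exp_competitionExponent
    (hK : ∀ x : ℝ × ℝ, K x = exp (-(x.1 ^ 4 + x.2 ^ 4) / (2 * σK ^ 4)))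
    (hα : ∀ x y : ℝ × ℝ, α x y =
      exp (-((x.1 - y.1) ^ 2 + (x.2 - y.2) ^ 2) / (2 * σα ^ 2)) *
      exp (c₁ * (x.1 * y.2 - x.2 * y.1) + c₂ * (x.1 * (y.1 - x.1) + x.2 * (y.2 - x.2))))
    (hf : ∀ x y, f x y = 1 - α x y * K x / K y) (x y : ℝ × ℝ) :
    f x y = 1 - exp (competitionExponent σK σα c₁ c₂ x y) := by
  rw [hf, hα, hK, hK, ← exp_add, ← exp_add, ← exp_sub, competitionExponent]
  congr 2
  ring

lemma selectionGradient_fst_eq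
    (hf : ∀ x y, f x y = 1 - exp (competitionExponent σK σα c₁ c₂ x y))
    {s₁ : ℝ × ℝ → ℝ} (hs₁ : ∀ x, s₁ x = deriv (fun t => f x (t, x.2)) x.1) (x : ℝ × ℝ) :
    s₁ x = c₁ * x.2 - c₂ * x.1 - 2 * x.1 ^ 3 / σK ^ 4 := by
  have hslice : (fun t => f x (t, x.2)) = fun t => 1 - exp (-(x.1 - t) ^ 2 / (2 * σα ^ 2)
      + (c₂ * x.1 - c₁ * x.2) * t + t ^ 4 / (2 * σK ^ 4)
      + (c₁ * x.1 * x.2 - c₂ * x.1 ^ 2 - x.1 ^ 4 / (2 * σK ^ 4))) := by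
    funext t
    rw [hf, competitionExponent]
    congr 2
    ring
  rw [hs₁, hslice,
    (hasDerivAt_one_sub_exp_of_eq_zero (hasDerivAt_gaussian_quartic _ _ _ _ _) (by ring)).deriv]
  ring

lemma selectionGradient_snd_eq
    (hf : ∀ x y, f x y = 1 - exp (competitionExponent σK σα c₁ c₂ x y))
    {s₂ : ℝ × ℝ → ℝ} (hs₂ : ∀ x, s₂ x = deriv (fun t => f x (x.1, t)) x.2) (x : ℝ × ℝ) :
    s₂ x = -c₁ * x.1 - c₂ * x.2 - 2 * x.2 ^ 3 / σK ^ 4 := by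
  have hslice : (fun t => f x (x.1, t)) = fun t => 1 - exp (-(x.2 - t) ^ 2 / (2 * σα ^ 2)
      + (c₁ * x.1 + c₂ * x.2) * t + t ^ 4 / (2 * σK ^ 4)
      + (-c₁ * x.1 * x.2 - c₂ * x.2 ^ 2 - x.2 ^ 4 / (2 * σK ^ 4))) := by
    funext t
    rw [hf, competitionExponent]
    congr 2
    ring
  rw [hs₂, hslice,
    (hasDerivAt_one_sub_exp_of_eq_zero (hasDerivAt_gaussian_quartic _ _ _ _ _) (by ring)).deriv]
  ring

end CompetitionModel

theorem stmt_10_general (σK σα c₁ c₂ : ℝ)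
    (K : ℝ × ℝ → ℝ) (α f : ℝ × ℝ → ℝ × ℝ → ℝ) (s₁ s₂ : ℝ × ℝ → ℝ)
    (hK : ∀ x : ℝ × ℝ, K x = Real.exp (-(x.1^4 + x.2^4)/(2*σK^4)))
    (hα : ∀ x y : ℝ × ℝ, α x y =
      Real.exp (-((x.1 - y.1)^2 + (x.2 - y.2)^2)/(2*σα^2)) *
      Real.exp (c₁*(x.1*y.2 - x.2*y.1) + c₂*(x.1*(y.1 - x.1) + x.2*(y.2 - x.2))))
    (hf : ∀ x y, f x y = 1 - α x y * K x / K y)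
    (hs₁ : ∀ x, s₁ x = deriv (fun t => f x (t, x.2)) x.1)
    (hs₂ : ∀ x, s₂ x = deriv (fun t => f x (x.1, t)) x.2) :
    s₁ (0, 0) = 0 ∧ s₂ (0, 0) = 0 ∧
    Matrix.det
      ((Matrix.of ![![deriv (fun t => s₁ (t, 0)) 0, deriv (fun t => s₁ (0, t)) 0],
          ![deriv (fun t => s₂ (t, 0)) 0, deriv (fun t => s₂ (0, t)) 0]]).map Complex.ofReal
        - (-(c₂ : ℂ) + (c₁ : ℂ) * Complex.I) • 1) = 0 ∧
    Matrix.det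
      ((Matrix.of ![![deriv (fun t => s₁ (t, 0)) 0, deriv (fun t => s₁ (0, t)) 0],
          ![deriv (fun t => s₂ (t, 0)) 0, deriv (fun t => s₂ (0, t)) 0]]).map Complex.ofReal
        - (-(c₂ : ℂ) - (c₁ : ℂ) * Complex.I) • 1) = 0 := by
  have hfE := eq_one_sub_exp_competitionExponent hK hα hf
  have hs₁' := selectionGradient_fst_eq hfE hs₁
  have hs₂' := selectionGradient_snd_eq hfE hs₂
  have hJ₁₁ : deriv (fun t => s₁ (t, 0)) 0 = -c₂ :=
    deriv_zero_of_eq_mul_sub_mul_pow_three _ (2 / σK ^ 4) fun t => by rw [hs₁']; ring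
  have hJ₁₂ : deriv (fun t => s₁ (0, t)) 0 = c₁ :=
    deriv_zero_of_eq_mul_sub_mul_pow_three _ 0 fun t => by rw [hs₁']; ring
  have hJ₂₁ : deriv (fun t => s₂ (t, 0)) 0 = -c₁ :=
    deriv_zero_of_eq_mul_sub_mul_pow_three _ 0 fun t => by rw [hs₂']; ring
  have hJ₂₂ : deriv (fun t => s₂ (0, t)) 0 = -c₂ :=
    deriv_zero_of_eq_mul_sub_mul_pow_three _ (2 / σK ^ 4) fun t => by rw [hs₂']; ring
  rw [hJ₁₁, hJ₁₂, hJ₂₁, hJ₂₂]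
  refine ⟨by simp [hs₁'], by simp [hs₂'], ?_, ?_⟩ <;>
    refine det_rotationScaling_sub_smul_one_eq_zero _ _ ?_ <;>
    push_cast <;> linear_combination (c₁ : ℂ) ^ 2 * Complex.I_sq

theorem stmt_10 (σK σα c₁ c₂ : ℝ) (hσK : 0 < σK) (hσα : 0 < σα)
    (K : ℝ × ℝ → ℝ) (α f : ℝ × ℝ → ℝ × ℝ → ℝ) (s₁ s₂ : ℝ × ℝ → ℝ)
    (hK : ∀ x : ℝ × ℝ, K x = Real.exp (-(x.1^4 + x.2^4)/(2*σK^4)))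
    (hα : ∀ x y : ℝ × ℝ, α x y =
      Real.exp (-((x.1 - y.1)^2 + (x.2 - y.2)^2)/(2*σα^2)) *
      Real.exp (c₁*(x.1*y.2 - x.2*y.1) + c₂*(x.1*(y.1 - x.1) + x.2*(y.2 - x.2))))
    (hf : ∀ x y, f x y = 1 - α x y * K x / K y)
    (hs₁ : ∀ x, s₁ x = deriv (fun t => f x (t, x.2)) x.1)
    (hs₂ : ∀ x, s₂ x = deriv (fun t => f x (x.1, t)) x.2) :
    s₁ (0, 0) = 0 ∧ s₂ (0, 0) = 0 ∧
    Matrix.det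
      ((Matrix.of ![![deriv (fun t => s₁ (t, 0)) 0, deriv (fun t => s₁ (0, t)) 0],
          ![deriv (fun t => s₂ (t, 0)) 0, deriv (fun t => s₂ (0, t)) 0]]).map Complex.ofReal
        - (-(c₂ : ℂ) + (c₁ : ℂ) * Complex.I) • 1) = 0 ∧
    Matrix.det
      ((Matrix.of ![![deriv (fun t => s₁ (t, 0)) 0, deriv (fun t => s₁ (0, t)) 0],
          ![deriv (fun t => s₂ (t, 0)) 0, deriv (fun t => s₂ (0, t)) 0]]).map Complex.ofReal
        - (-(c₂ : ℂ) - (c₁ : ℂ) * Complex.I) • 1) = 0 :=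
  stmt_10_general σK σα c₁ c₂ K α f s₁ s₂ hK hα hf hs₁ hs₂
end

section
/- With K and α as in the previous example (K(x) = exp(−(x₁⁴+x₂⁴)/(2σ_K⁴)), α(x,y) = exp(−|x−y|²/(2σ_α²)) · exp(c₁(x₁y₂−x₂y₁) + c₂(x₁·(y₁−x₁)+x₂·(y₂−x₂))) and f(x,y) = 1 − α(x,y)K(x)/K(y)), if c₁ ≠ 0 then there is no smooth function S : ℝ² → ℝ with ∇S equal to the selection gradient s of f. -/
theorem stmt_11 (σK σα c₁ c₂ : ℝ) (hσK : 0 < σK) (hσα : 0 < σα) (hc₁ : c₁ ≠ 0)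
    (K : ℝ × ℝ → ℝ) (α f : ℝ × ℝ → ℝ × ℝ → ℝ) (s₁ s₂ : ℝ × ℝ → ℝ)
    (hK : ∀ x : ℝ × ℝ, K x = Real.exp (-(x.1^4 + x.2^4)/(2*σK^4)))
    (hα : ∀ x y : ℝ × ℝ, α x y =
      Real.exp (-((x.1 - y.1)^2 + (x.2 - y.2)^2)/(2*σα^2)) *
      Real.exp (c₁*(x.1*y.2 - x.2*y.1) + c₂*(x.1*(y.1 - x.1) + x.2*(y.2 - x.2))))
    (hf : ∀ x y, f x y = 1 - α x y * K x / K y)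
    (hs₁ : ∀ x, s₁ x = deriv (fun t => f x (t, x.2)) x.1)
    (hs₂ : ∀ x, s₂ x = deriv (fun t => f x (x.1, t)) x.2) :
    ¬ ∃ S : ℝ × ℝ → ℝ, ContDiff ℝ (⊤ : ℕ∞) S ∧
      ∀ x : ℝ × ℝ, deriv (fun t => S (t, x.2)) x.1 = s₁ x ∧
        deriv (fun t => S (x.1, t)) x.2 = s₂ x := by
  have hK4 : σK^4 ≠ 0 := by positivity
  have hα2 : σα^2 ≠ 0 := by positivity
  -- Explicit formula for s₁
  have hs₁' : ∀ x : ℝ × ℝ, s₁ x = c₁*x.2 - c₂*x.1 - 2*x.1^3/σK^4 := by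
    intro x
    rw [hs₁]
    set a := x.1
    set b := x.2
    have hfun : (fun t => f x (t, x.2)) = fun t => 1 - Real.exp (
        -((a - t)^2 + (b - b)^2)/(2*σα^2)
        + (c₁*(a*b - b*t) + c₂*(a*(t - a) + b*(b - b)))
        + (-(a^4 + b^4)/(2*σK^4))
        - (-(t^4 + b^4)/(2*σK^4))) := by
      funext t
      rw [hf, hα, hK, hK]
      rw [div_eq_mul_inv, ← Real.exp_neg, ← Real.exp_add, ← Real.exp_add, ← Real.exp_add]
      simp only [a, b]
      ring_nf
    rw [hfun]
    have h1 : HasDerivAt (fun t : ℝ => -((a - t)^2 + (b - b)^2)/(2*σα^2))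
        (-(2*(a - a)^1*(-1) + 0)/(2*σα^2)) a := by
      have := ((((hasDerivAt_id a).const_sub a).pow 2).add_const ((b-b)^2)).neg.div_const (2*σα^2)
      simpa using this
    have h2 : HasDerivAt (fun t : ℝ => c₁*(a*b - b*t) + c₂*(a*(t - a) + b*(b - b)))
        (c₁*(-(b*1)) + c₂*(a*1)) a := by
      have hA : HasDerivAt (fun t : ℝ => a*b - b*t) (-(b*1)) a :=
        ((hasDerivAt_id a).const_mul b).const_sub (a*b)
      have hB : HasDerivAt (fun t : ℝ => a*(t - a) + b*(b - b)) (a*1) a := by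
        have := (((hasDerivAt_id a).sub_const a).const_mul a).add_const (b*(b - b))
        simpa using this
      exact (hA.const_mul c₁).add (hB.const_mul c₂)
    have h3 : HasDerivAt (fun _ : ℝ => -(a^4 + b^4)/(2*σK^4)) 0 a := hasDerivAt_const _ _
    have h4 : HasDerivAt (fun t : ℝ => -(t^4 + b^4)/(2*σK^4)) (-(4*a^3 + 0)/(2*σK^4)) a := by
      have := (((hasDerivAt_pow 4 a).add_const (b^4)).neg).div_const (2*σK^4)
      simpa using this
    have hfin := (((h1.add h2).add h3).sub h4).exp.const_sub 1
    refine hfin.deriv.trans ?_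
    simp only [Pi.add_apply, Pi.sub_apply]
    have hzero : -((a - a)^2 + (b - b)^2)/(2*σα^2)
        + (c₁*(a*b - b*a) + c₂*(a*(a - a) + b*(b - b)))
        + (-(a^4 + b^4)/(2*σK^4)) - (-(a^4 + b^4)/(2*σK^4)) = 0 := by ring
    rw [hzero, Real.exp_zero]
    field_simp
    ring
  -- Explicit formula for s₂
  have hs₂' : ∀ x : ℝ × ℝ, s₂ x = -c₁*x.1 - c₂*x.2 - 2*x.2^3/σK^4 := by
    intro x
    rw [hs₂]
    set a := x.1
    set b := x.2
    have hfun : (fun t => f x (x.1, t)) = fun t => 1 - Real.exp (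
        -((a - a)^2 + (b - t)^2)/(2*σα^2)
        + (c₁*(a*t - b*a) + c₂*(a*(a - a) + b*(t - b)))
        + (-(a^4 + b^4)/(2*σK^4))
        - (-(a^4 + t^4)/(2*σK^4))) := by
      funext t
      rw [hf, hα, hK, hK]
      rw [div_eq_mul_inv, ← Real.exp_neg, ← Real.exp_add, ← Real.exp_add, ← Real.exp_add]
      simp only [a, b]
      ring_nf
    rw [hfun]
    have h1 : HasDerivAt (fun t : ℝ => -((a - a)^2 + (b - t)^2)/(2*σα^2))
        (-(0 + 2*(b - b)^1*(-1))/(2*σα^2)) b := by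
      have := ((((hasDerivAt_id b).const_sub b).pow 2).const_add ((a-a)^2)).neg.div_const (2*σα^2)
      simpa using this
    have h2 : HasDerivAt (fun t : ℝ => c₁*(a*t - b*a) + c₂*(a*(a - a) + b*(t - b)))
        (c₁*(a*1) + c₂*(b*1)) b := by
      have hA : HasDerivAt (fun t : ℝ => a*t - b*a) (a*1) b := by
        have := ((hasDerivAt_id b).const_mul a).sub_const (b*a)
        simpa using this
      have hB : HasDerivAt (fun t : ℝ => a*(a - a) + b*(t - b)) (b*1) b := by
        have := (((hasDerivAt_id b).sub_const b).const_mul b).const_add (a*(a - a))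
        simpa using this
      exact (hA.const_mul c₁).add (hB.const_mul c₂)
    have h3 : HasDerivAt (fun _ : ℝ => -(a^4 + b^4)/(2*σK^4)) 0 b := hasDerivAt_const _ _
    have h4 : HasDerivAt (fun t : ℝ => -(a^4 + t^4)/(2*σK^4)) (-(0 + 4*b^3)/(2*σK^4)) b := by
      have := (((hasDerivAt_pow 4 b).const_add (a^4)).neg).div_const (2*σK^4)
      simpa using this
    have hfin := (((h1.add h2).add h3).sub h4).exp.const_sub 1
    refine hfin.deriv.trans ?_
    simp only [Pi.add_apply, Pi.sub_apply]
    have hzero : -((a - a)^2 + (b - b)^2)/(2*σα^2)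
        + (c₁*(a*b - b*a) + c₂*(a*(a - a) + b*(b - b)))
        + (-(a^4 + b^4)/(2*σK^4)) - (-(a^4 + b^4)/(2*σK^4)) = 0 := by ring
    rw [hzero, Real.exp_zero]
    field_simp
    ring
  -- main argument: symmetry of second derivative
  rintro ⟨S, hS, hgrad⟩
  have h1 : ∀ x : ℝ × ℝ, deriv (fun t => S (t, x.2)) x.1 = c₁*x.2 - c₂*x.1 - 2*x.1^3/σK^4 :=
    fun x => (hgrad x).1.trans (hs₁' x)
  have h2 : ∀ x : ℝ × ℝ, deriv (fun t => S (x.1, t)) x.2 = -c₁*x.1 - c₂*x.2 - 2*x.2^3/σK^4 :=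
    fun x => (hgrad x).2.trans (hs₂' x)
  have hd : Differentiable ℝ S := hS.differentiable (by simp)
  have hd' : Differentiable ℝ (fderiv ℝ S) :=
    (hS.fderiv_right (m := 1) ((by exact WithTop.coe_le_coe.mpr le_top))).differentiable (by simp)
  have key1 : ∀ x : ℝ × ℝ, fderiv ℝ S x (1, 0) = c₁*x.2 - c₂*x.1 - 2*x.1^3/σK^4 := by
    intro x
    have hline : HasDerivAt (fun t : ℝ => (t, x.2)) ((1 : ℝ), (0 : ℝ)) x.1 :=
      (hasDerivAt_id x.1).prodMk (hasDerivAt_const x.1 x.2)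
    have hcomp : HasDerivAt (fun t => S (t, x.2)) (fderiv ℝ S x (1, 0)) x.1 := by
      have := (hd (x.1, x.2)).hasFDerivAt.comp_hasDerivAt x.1 hline
      exact this
    rw [← h1 x, hcomp.deriv]
  have key2 : ∀ x : ℝ × ℝ, fderiv ℝ S x (0, 1) = -c₁*x.1 - c₂*x.2 - 2*x.2^3/σK^4 := by
    intro x
    have hline : HasDerivAt (fun t : ℝ => (x.1, t)) ((0 : ℝ), (1 : ℝ)) x.2 :=
      (hasDerivAt_const x.2 x.1).prodMk (hasDerivAt_id x.2)
    have hcomp : HasDerivAt (fun t => S (x.1, t)) (fderiv ℝ S x (0, 1)) x.2 := by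
      have := (hd (x.1, x.2)).hasFDerivAt.comp_hasDerivAt x.2 hline
      exact this
    rw [← h2 x, hcomp.deriv]
  set f'' := fderiv ℝ (fderiv ℝ S) (0 : ℝ × ℝ) with hf''
  have hsym : f'' (1,0) (0,1) = f'' (0,1) (1,0) :=
    second_derivative_symmetric (fun y => (hd y).hasFDerivAt) (hd' 0).hasFDerivAt _ _
  have hg : ∀ v : ℝ × ℝ, HasFDerivAt (fun x : ℝ × ℝ => fderiv ℝ S x v)
      ((fderiv ℝ S 0).comp (0 : (ℝ×ℝ) →L[ℝ] (ℝ×ℝ)) + f''.flip v) 0 := by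
    intro v
    have := (hd' 0).hasFDerivAt.clm_apply (hasFDerivAt_const v (0 : ℝ × ℝ))
    simpa using this
  have hfst : HasFDerivAt (fun x : ℝ × ℝ => x.1) (ContinuousLinearMap.fst ℝ ℝ ℝ) (0 : ℝ×ℝ) :=
    hasFDerivAt_fst
  have hsnd : HasFDerivAt (fun x : ℝ × ℝ => x.2) (ContinuousLinearMap.snd ℝ ℝ ℝ) (0 : ℝ×ℝ) :=
    hasFDerivAt_snd
  have hcube1 : HasFDerivAt (fun x : ℝ × ℝ => 2*x.1^3/σK^4) (0 : (ℝ×ℝ) →L[ℝ] ℝ) (0:ℝ×ℝ) := by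
    have h := (((hfst.mul hfst).mul hfst).const_mul 2).mul_const ((σK^4)⁻¹)
    have he : (fun x : ℝ×ℝ => 2*(x.1*x.1*x.1) * (σK^4)⁻¹) = fun x : ℝ×ℝ => 2*x.1^3/σK^4 := by
      funext x; ring
    simp only [Pi.mul_apply] at h
    rw [he] at h
    refine h.congr_fderiv ?_
    ext <;> simp
  have hcube2 : HasFDerivAt (fun x : ℝ × ℝ => 2*x.2^3/σK^4) (0 : (ℝ×ℝ) →L[ℝ] ℝ) (0:ℝ×ℝ) := by
    have h := (((hsnd.mul hsnd).mul hsnd).const_mul 2).mul_const ((σK^4)⁻¹)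
    have he : (fun x : ℝ×ℝ => 2*(x.2*x.2*x.2) * (σK^4)⁻¹) = fun x : ℝ×ℝ => 2*x.2^3/σK^4 := by
      funext x; ring
    simp only [Pi.mul_apply] at h
    rw [he] at h
    refine h.congr_fderiv ?_
    ext <;> simp
  have hp1 : HasFDerivAt (fun x : ℝ × ℝ => c₁*x.2 - c₂*x.1 - 2*x.1^3/σK^4)
      (c₁ • ContinuousLinearMap.snd ℝ ℝ ℝ - c₂ • ContinuousLinearMap.fst ℝ ℝ ℝ - 0) (0 : ℝ×ℝ) :=
    ((hsnd.const_mul c₁).sub (hfst.const_mul c₂)).sub hcube1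
  have hp2 : HasFDerivAt (fun x : ℝ × ℝ => -c₁*x.1 - c₂*x.2 - 2*x.2^3/σK^4)
      ((-c₁) • ContinuousLinearMap.fst ℝ ℝ ℝ - c₂ • ContinuousLinearMap.snd ℝ ℝ ℝ - 0) (0 : ℝ×ℝ) :=
    ((hfst.const_mul (-c₁)).sub (hsnd.const_mul c₂)).sub hcube2
  have e1 : (fun x : ℝ × ℝ => fderiv ℝ S x (1,0)) =
      (fun x : ℝ × ℝ => c₁*x.2 - c₂*x.1 - 2*x.1^3/σK^4) := funext key1
  have e2 : (fun x : ℝ × ℝ => fderiv ℝ S x (0,1)) =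
      (fun x : ℝ × ℝ => -c₁*x.1 - c₂*x.2 - 2*x.2^3/σK^4) := funext key2
  have u1 := (hg (1,0)).unique (e1 ▸ hp1)
  have u2 := (hg (0,1)).unique (e2 ▸ hp2)
  have v1 : f'' (0,1) (1,0) = c₁ := by
    have := congrArg (fun L => L ((0:ℝ),(1:ℝ))) u1
    simpa using this
  have v2 : f'' (1,0) (0,1) = -c₁ := by
    have := congrArg (fun L => L ((1:ℝ),(0:ℝ))) u2
    simpa using this
  rw [v1, v2] at hsym
  apply hc₁
  linarith
end
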